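/- arXiv:2505.00206 — 2 statements merged into one kernel-verified Lean document; each statement's English description precedes it below -/
import Mathlib

section
/- Fix an integer k ≥ 2 and p ∈ (0, 1/2]. For every index i ∈ {1,…,k}, marginalizing out the i-th bit of the distribution P_k yields k−1 independent p-biased bits: for every y ∈ {0,1}^{k−1}, writing m' for the number of ones in y, the sum over b ∈ {0,1} of P_k applied to the string obtained from y by inserting b at position i equals p^{m'} (1−p)^{(k−1)−m'}. -/
open Finset

def ones {k : ℕ} (x : Fin k → Bool) : ℕ := (Finset.univ.filter fun i => x i = true).card

noncomputable def Pk (k : ℕ) (p : ℝ) (x : Fin k → Bool) : ℝ :=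
  p ^ ones x * (1 - p) ^ (k - ones x) - (-1 : ℝ) ^ (k - ones x) * p ^ k

lemma ones_eq_sum {k : ℕ} (x : Fin k → Bool) : ones x = ∑ j, if x j = true then 1 else 0 :=
  card_filter _ _

lemma ones_insertNth {k : ℕ} (i : Fin (k + 1)) (b : Bool) (y : Fin k → Bool) :
    ones (i.insertNth b y) = (if b then 1 else 0) + ones y := by
  simp [ones_eq_sum, Fin.sum_univ_succAbove _ i]

lemma ones_le {k : ℕ} (y : Fin k → Bool) : ones y ≤ k :=
  (card_le_univ _).trans_eq (Fintype.card_fin k)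

section insertNth

variable {k : ℕ} (p : ℝ) (i : Fin (k + 1)) (y : Fin k → Bool)

lemma Pk_insertNth_true :
    Pk (k + 1) p (i.insertNth true y)
      = p ^ (ones y + 1) * (1 - p) ^ (k - ones y) - (-1 : ℝ) ^ (k - ones y) * p ^ (k + 1) := by
  rw [Pk, ones_insertNth, if_pos rfl, add_comm 1, Nat.add_sub_add_right]

lemma Pk_insertNth_false :
    Pk (k + 1) p (i.insertNth false y)
      = p ^ ones y * (1 - p) ^ (k - ones y + 1) + (-1 : ℝ) ^ (k - ones y) * p ^ (k + 1) := by
  rw [Pk, ones_insertNth, if_neg Bool.false_ne_true, zero_add, Nat.sub_add_comm (ones_le y),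
    pow_succ (-1 : ℝ)]
  ring

end insertNth

-- Strings of length `k + 1` play the role of the paper's length-`k` strings.
theorem stmt8_general (k : ℕ) (p : ℝ)
    (i : Fin (k + 1)) (y : Fin k → Bool) :
    (∑ b : Bool, Pk (k + 1) p (i.insertNth b y))
      = p ^ ones y * (1 - p) ^ (k - ones y) := by
  rw [Fintype.sum_bool, Pk_insertNth_true, Pk_insertNth_false]
  -- the correction terms cancel, and the main terms add up via `p + (1 - p) = 1`
  ring

/-- (with strings of length `k + 1 ≥ 2` playing the role of the length-`k`
strings of the paper) For every position `i`, marginalizing out the `i`-th bit of the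
distribution `P_{k+1}` yields `k` independent `p`-biased bits: for every
`y ∈ {0,1}^k` with `m'` ones, `∑ b ∈ {0,1}, P_{k+1}(insert b at position i into y)`
equals `p^{m'} (1-p)^{k-m'}`. -/
theorem stmt8 (k : ℕ) (hk : 1 ≤ k) (p : ℝ) (hp0 : 0 < p) (hp2 : p ≤ 1 / 2)
    (i : Fin (k + 1)) (y : Fin k → Bool) :
    (∑ b : Bool, Pk (k + 1) p (i.insertNth b y))
      = p ^ ones y * (1 - p) ^ (k - ones y) :=
  stmt8_general k p i y
end

section
/- Fix an integer k ≥ 2, an integer n ≥ 2, a real α > 0 such that d = α log₂ n is a positive integer, let p = (1 − 2^{−2k/α})^{1/k}, and assume p ≤ 1/2. Let (U_1,…,U_k) be sampled from the planted distribution with fixed locations s = (s_1,…,s_k) ∈ {1,…,n}^k, and let R ⊆ {1,…,k} × {1,…,n} be a fixed set of positions; form a new instance by replacing, for each (ℓ,i) ∈ R, the vector U_{ℓ,i} with a freshly sampled vector of i.i.d. p-biased entries (independently of everything else). If R contains at least one planted position (ℓ, s_ℓ), then the resulting instance is distributed as k·n vectors whose k·n·d entries are all i.i.d. p-biased (the model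 distribution); if R contains no planted position, the resulting instance is distributed according to the planted distribution with locations s. -/
/-!
Writing `P_k(x) = ∏ₗ bern(xₗ) − p^k ∏ₗ (±1)` with sign `−1` at the zero bits, summing out any
single coordinate kills the parity term, so any `k − 1` planted vectors are i.i.d. `p`-biased.
Resampling the positions `R` turns a law into its marginal off `R` times fresh `p`-biased weights
on `R`. If `R` hits a planted position, the marginal sees at most `k − 1` planted vectors and is
therefore i.i.d.; otherwise `R` consists of i.i.d. positions, which resampling leaves unchanged.
-/

open Finset

/-- The weight of a `p`-biased bit: `1` has probability `p`, `0` has probability `1 - p`. -/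
noncomputable def bern (p : ℝ) (b : Bool) : ℝ := if b then p else 1 - p

/-- The probability of an instance under the model distribution: all `k·n·d` entries are
i.i.d. `p`-biased. -/
noncomputable def modelWeight (k n d : ℕ) (p : ℝ)
    (U : Fin k → Fin n → Fin d → Bool) : ℝ :=
  ∏ l : Fin k, ∏ i : Fin n, ∏ j : Fin d, bern p (U l i j)

/-- The probability of an instance `U` under the planted distribution with locations `s`:
the `d` coordinates of the tuple of planted vectors `(U_{1,s_1},…,U_{k,s_k})` are i.i.d.
according to `P_k`, and all entries of all other vectors are i.i.d. `p`-biased. -/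
noncomputable def plantedWeight (k n d : ℕ) (p : ℝ) (s : Fin k → Fin n)
    (U : Fin k → Fin n → Fin d → Bool) : ℝ :=
  (∏ j : Fin d, Pk k p (fun l => U l (s l) j)) *
    ∏ l : Fin k, ∏ i ∈ Finset.univ.filter (fun i : Fin n => i ≠ s l),
      ∏ j : Fin d, bern p (U l i j)

@[simp]
theorem Equiv.funSplitAt_symm_apply_self {ι β : Type*} [DecidableEq ι] (i : ι) (b : β)
    (h : {j // j ≠ i} → β) : (Equiv.funSplitAt i β).symm (b, h) i = b := by
  simp [Equiv.funSplitAt_symm_apply]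

@[simp]
theorem Equiv.funSplitAt_symm_apply_coe {ι β : Type*} [DecidableEq ι] (i : ι) (b : β)
    (h : {j // j ≠ i} → β) (j : {j // j ≠ i}) : (Equiv.funSplitAt i β).symm (b, h) j = h j := by
  simp [Equiv.funSplitAt_symm_apply, j.2]

theorem Fintype.prod_funSplitAt_symm {ι β M : Type*} [Fintype ι] [DecidableEq ι] [CommMonoid M]
    (i : ι) (f : ι → β → M) (b : β) (h : {j // j ≠ i} → β) :
    ∏ j, f j ((Equiv.funSplitAt i β).symm (b, h) j) = f i b * ∏ j : {j // j ≠ i}, f j (h j) := by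
  rw [Fintype.prod_eq_mul_prod_subtype_ne _ i]
  simp only [Equiv.funSplitAt_symm_apply_self, Equiv.funSplitAt_symm_apply_coe]

section Marginal

variable {ι β : Type*} [Fintype ι] [DecidableEq ι] [Fintype β]

def HasIIDMarginalOff (Q : (ι → β) → ℝ) (w : β → ℝ) (i : ι) : Prop :=
  ∀ h : {j // j ≠ i} → β, ∑ b, Q ((Equiv.funSplitAt i β).symm (b, h)) = ∏ j, w (h j)

theorem HasIIDMarginalOff.sum_mul_prod {Q : (ι → β) → ℝ} {w : β → ℝ} {i : ι}
    (hQ : HasIIDMarginalOff Q w i) {c : ι → β → ℝ} (hc : ∀ b, c i b = 1) :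
    ∑ g, Q g * ∏ j, c j (g j) = ∏ j : {j // j ≠ i}, ∑ b, w b * c j b := by
  rw [← (Equiv.funSplitAt i β).symm.sum_comp, Fintype.sum_prod_type, Finset.sum_comm]
  simp only [Fintype.prod_funSplitAt_symm, hc, one_mul, ← Finset.sum_mul, hQ _,
    ← Finset.prod_mul_distrib, Fintype.prod_sum]

theorem HasIIDMarginalOff.pi {J : Type*} [Fintype J] [DecidableEq J] {P : (ι → β) → ℝ}
    {u : β → ℝ} {i : ι} (hP : HasIIDMarginalOff P u i) :
    HasIIDMarginalOff (fun g : ι → J → β => ∏ j, P fun l => g l j) (fun v => ∏ j, u (v j)) i := by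
  intro h
  have hcoord : ∀ (v : J → β) (j : J), (fun l => (Equiv.funSplitAt i (J → β)).symm (v, h) l j)
      = (Equiv.funSplitAt i β).symm (v j, fun l => h l j) := by
    intro v j
    ext l
    by_cases hl : l = i <;> simp [Equiv.funSplitAt_symm_apply, hl]
  simp only [hcoord]
  rw [← Fintype.prod_sum fun j b => P ((Equiv.funSplitAt i β).symm (b, fun l => h l j))]
  simp only [hP _]
  exact Finset.prod_comm

end Marginal

theorem prod_ite_eq_pow_ones {M : Type*} [CommMonoid M] {k : ℕ} (x : Fin k → Bool) (a b : M) :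
    ∏ l, (if x l then a else b) = a ^ ones x * b ^ (k - ones x) := by
  rw [Finset.prod_ite, Finset.prod_const, Finset.prod_const, Finset.filter_not,
    Finset.card_sdiff_of_subset (Finset.filter_subset _ _), card_univ, Fintype.card_fin]
  rfl

theorem Pk_eq_prod_bern_sub (k : ℕ) (p : ℝ) (x : Fin k → Bool) :
    Pk k p x = ∏ l, bern p (x l) - p ^ k * ∏ l, (if x l then 1 else -1 : ℝ) := by
  simp only [Pk, bern, prod_ite_eq_pow_ones, one_pow, one_mul]
  ring

theorem hasIIDMarginalOff_Pk (k : ℕ) (p : ℝ) (i : Fin k) :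
    HasIIDMarginalOff (Pk k p) (bern p) i := fun h => by
  simp only [Pk_eq_prod_bern_sub, Fintype.prod_funSplitAt_symm i (fun _ => bern p),
    Fintype.prod_funSplitAt_symm i (fun _ (b : Bool) => if b then (1 : ℝ) else -1)]
  simp only [Fintype.sum_bool, bern, Bool.false_eq_true, if_true, if_false]
  ring

theorem ite_eq_prod_prod_ite {ι κ β : Type*} [Fintype ι] [Fintype κ] [DecidableEq β]
    (U V : ι → κ → β) :
    (if U = V then (1 : ℝ) else 0) = ∏ l, ∏ i, if U l i = V l i then 1 else 0 := by
  simp only [Fintype.prod_boole, funext_iff]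

theorem sum_mul_ite_ite_eq {β : Type*} [Fintype β] [DecidableEq β] {w : β → ℝ}
    (hw : ∑ b, w b = 1) (P : Prop) [Decidable P] (v : β) :
    ∑ b, w b * (if P then 1 else if b = v then 1 else 0) = if P then 1 else w v := by
  split_ifs <;> simp [hw]

section Resampling

variable {ι κ β : Type*} [Fintype ι] [Fintype κ] [Fintype β] [DecidableEq ι] [DecidableEq κ]

def plantedWeightOf (Q : (ι → β) → ℝ) (w : β → ℝ) (s : ι → κ) (U : ι → κ → β) : ℝ :=
  Q (fun l => U l (s l)) * ∏ l, ∏ i : {i // i ≠ s l}, w (U l i)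

theorem sum_plantedWeightOf_mul_prod (Q : (ι → β) → ℝ) (w : β → ℝ) (s : ι → κ)
    (c : ι → κ → β → ℝ) :
    ∑ U, plantedWeightOf Q w s U * ∏ l, ∏ i, c l i (U l i) =
      (∑ g, Q g * ∏ l, c l (s l) (g l)) * ∏ l, ∏ i : {i // i ≠ s l}, ∑ b, w b * c l i b := by
  let e := (Equiv.piCongrRight fun l => Equiv.funSplitAt (s l) β).trans
    (Equiv.arrowProdEquivProdArrow ι (fun _ => β) fun l => {i // i ≠ s l} → β)
  have he : ∀ g h, e.symm (g, h) = fun l => (Equiv.funSplitAt (s l) β).symm (g l, h l) :=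
    fun _ _ => rfl
  rw [← e.symm.sum_comp, Fintype.sum_prod_type]
  simp only [he, plantedWeightOf, Fintype.prod_funSplitAt_symm,
    Equiv.funSplitAt_symm_apply_self, Equiv.funSplitAt_symm_apply_coe, Fintype.prod_sum,
    Finset.prod_mul_distrib, Finset.sum_mul_sum]
  exact Finset.sum_congr rfl fun g _ => Finset.sum_congr rfl fun h _ => by ring

variable [DecidableEq β]

def resampled (μ : (ι → κ → β) → ℝ) (w : β → ℝ) (R : Finset (ι × κ)) (V : ι → κ → β) : ℝ :=
  ∑ U : ι → κ → β, ∑ F : ι → κ → β, μ U * (∏ l, ∏ i, w (F l i)) *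
    if (fun l i => if (l, i) ∈ R then F l i else U l i) = V then 1 else 0

theorem resampled_eq {w : β → ℝ} (hw : ∑ b, w b = 1) (μ : (ι → κ → β) → ℝ)
    (R : Finset (ι × κ)) (V : ι → κ → β) :
    resampled μ w R V =
      (∑ U, μ U * ∏ l, ∏ i, if (l, i) ∈ R then 1 else if U l i = V l i then 1 else 0) *
        ∏ l, ∏ i, if (l, i) ∈ R then w (V l i) else 1 := by
  have hsplit : ∀ U F : ι → κ → β,
      (if (fun l i => if (l, i) ∈ R then F l i else U l i) = V then (1 : ℝ) else 0) =
        (∏ l, ∏ i, if (l, i) ∈ R then 1 else if U l i = V l i then 1 else 0) *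
          ∏ l, ∏ i, if (l, i) ∈ R then (if F l i = V l i then 1 else 0) else 1 := by
    intro U F
    simp only [ite_eq_prod_prod_ite, ← Finset.prod_mul_distrib]
    refine Finset.prod_congr rfl fun l _ => Finset.prod_congr rfl fun i _ => ?_
    split_ifs <;> simp
  have hfresh : ∑ F : ι → κ → β,
      (∏ l, ∏ i, w (F l i)) * ∏ l, ∏ i, (if (l, i) ∈ R then (if F l i = V l i then 1 else 0) else 1)
        = ∏ l, ∏ i, if (l, i) ∈ R then w (V l i) else 1 := by
    have hpos : ∀ l i, (if (l, i) ∈ R then w (V l i) else 1) =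
        ∑ b, w b * if (l, i) ∈ R then (if b = V l i then 1 else 0) else 1 := by
      intro l i
      split_ifs <;> simp [hw]
    simp only [hpos, Fintype.prod_sum, ← Finset.prod_mul_distrib]
  rw [← hfresh, Finset.sum_mul_sum]
  refine Finset.sum_congr rfl fun U _ => Finset.sum_congr rfl fun F _ => ?_
  rw [hsplit]
  ring

variable {w : β → ℝ}

theorem resampled_plantedWeightOf_of_mem (hw : ∑ b, w b = 1) {Q : (ι → β) → ℝ} {l₀ : ι}
    (hQ : HasIIDMarginalOff Q w l₀) (s : ι → κ) {R : Finset (ι × κ)} (hR : (l₀, s l₀) ∈ R)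
    (V : ι → κ → β) :
    resampled (plantedWeightOf Q w s) w R V = ∏ l, ∏ i, w (V l i) := by
  rw [resampled_eq hw, sum_plantedWeightOf_mul_prod Q w s
    (fun l i b => if (l, i) ∈ R then 1 else if b = V l i then 1 else 0),
    hQ.sum_mul_prod (c := fun l b => if (l, s l) ∈ R then 1 else if b = V l (s l) then 1 else 0)
      (by simp [hR])]
  simp only [sum_mul_ite_ite_eq hw]
  have hplanted : ∏ l : {l // l ≠ l₀}, (if (l.1, s l) ∈ R then 1 else w (V l (s l))) =
      ∏ l, if (l, s l) ∈ R then 1 else w (V l (s l)) := by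
    rw [Fintype.prod_eq_mul_prod_subtype_ne _ l₀, if_pos hR, one_mul]
  rw [hplanted, ← Finset.prod_mul_distrib, ← Finset.prod_mul_distrib]
  refine Finset.prod_congr rfl fun l _ => ?_
  rw [← Fintype.prod_eq_mul_prod_subtype_ne (fun i => if (l, i) ∈ R then 1 else w (V l i)),
    ← Finset.prod_mul_distrib]
  exact Finset.prod_congr rfl fun i _ => by split_ifs <;> simp

theorem resampled_plantedWeightOf_of_forall_notMem (hw : ∑ b, w b = 1) (Q : (ι → β) → ℝ)
    (s : ι → κ) {R : Finset (ι × κ)} (hR : ∀ l, (l, s l) ∉ R) (V : ι → κ → β) :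
    resampled (plantedWeightOf Q w s) w R V = plantedWeightOf Q w s V := by
  rw [resampled_eq hw, sum_plantedWeightOf_mul_prod Q w s
    (fun l i b => if (l, i) ∈ R then 1 else if b = V l i then 1 else 0)]
  simp only [sum_mul_ite_ite_eq hw]
  simp only [hR, if_false, Fintype.prod_boole, ← funext_iff, mul_ite, mul_one, mul_zero,
    Finset.sum_ite_eq', Finset.mem_univ, if_true]
  rw [plantedWeightOf, mul_assoc, ← Finset.prod_mul_distrib]
  congr 1
  refine Finset.prod_congr rfl fun l _ => ?_
  rw [Fintype.prod_eq_mul_prod_subtype_ne (fun i => if (l, i) ∈ R then w (V l i) else 1) (s l),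
    if_neg (hR l), one_mul, ← Finset.prod_mul_distrib]
  exact Finset.prod_congr rfl fun i _ => by split_ifs <;> simp

end Resampling

theorem sum_prod_bern (J : Type*) [Fintype J] [DecidableEq J] (p : ℝ) :
    ∑ v : J → Bool, ∏ j, bern p (v j) = 1 := by
  rw [← Fintype.prod_sum fun (_ : J) b => bern p b]
  simp [bern]

theorem plantedWeight_eq_plantedWeightOf (k n d : ℕ) (p : ℝ) (s : Fin k → Fin n) :
    plantedWeight k n d p s =
      plantedWeightOf (fun g : Fin k → Fin d → Bool => ∏ j, Pk k p fun l => g l j)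
        (fun v => ∏ j, bern p (v j)) s := by
  ext U
  simp only [plantedWeight, plantedWeightOf]
  congr 1
  exact Finset.prod_congr rfl fun l _ => Finset.prod_subtype _ (by simp) _

theorem stmt13_general (k n : ℕ) (d : ℕ) (p : ℝ) (s : Fin k → Fin n) (R : Finset (Fin k × Fin n)) :
    ((∃ l : Fin k, (l, s l) ∈ R) →
      ∀ V : Fin k → Fin n → Fin d → Bool,
        (∑ U : Fin k → Fin n → Fin d → Bool, ∑ F : Fin k → Fin n → Fin d → Bool,
            plantedWeight k n d p s U * modelWeight k n d p F *
              (if (fun l i => if (l, i) ∈ R then F l i else U l i) = V then 1 else 0))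
          = modelWeight k n d p V) ∧
    ((∀ l : Fin k, (l, s l) ∉ R) →
      ∀ V : Fin k → Fin n → Fin d → Bool,
        (∑ U : Fin k → Fin n → Fin d → Bool, ∑ F : Fin k → Fin n → Fin d → Bool,
            plantedWeight k n d p s U * modelWeight k n d p F *
              (if (fun l i => if (l, i) ∈ R then F l i else U l i) = V then 1 else 0))
          = plantedWeight k n d p s V) := by
  rw [plantedWeight_eq_plantedWeightOf]
  refine ⟨fun ⟨l₀, hl₀⟩ V => ?_, fun hR V => ?_⟩
  · exact resampled_plantedWeightOf_of_mem (sum_prod_bern _ p) (hasIIDMarginalOff_Pk k p l₀).pi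
      s hl₀ V
  · exact resampled_plantedWeightOf_of_forall_notMem (sum_prod_bern _ p) _ s hR V

/-- Sample `U` from the planted distribution with locations `s` and,
independently, fresh i.i.d. `p`-biased vectors `F`; replace the vectors of `U` at the
positions of `R` by the corresponding fresh vectors. If `R` contains a planted position
`(ℓ, s_ℓ)`, the resulting instance is distributed according to the model distribution;
if `R` contains no planted position, it is distributed according to the planted
distribution with locations `s`. -/
theorem stmt13 (k n : ℕ) (hk : 2 ≤ k) (hn : 2 ≤ n) (α : ℝ) (hα : 0 < α)
    (d : ℕ) (hd : 0 < d) (hdα : (d : ℝ) = α * Real.logb 2 n)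
    (p : ℝ) (hp : p = (1 - (2 : ℝ) ^ (-(2 * (k : ℝ)) / α)) ^ ((1 : ℝ) / k))
    (hp2 : p ≤ 1 / 2) (s : Fin k → Fin n) (R : Finset (Fin k × Fin n)) :
    ((∃ l : Fin k, (l, s l) ∈ R) →
      ∀ V : Fin k → Fin n → Fin d → Bool,
        (∑ U : Fin k → Fin n → Fin d → Bool, ∑ F : Fin k → Fin n → Fin d → Bool,
            plantedWeight k n d p s U * modelWeight k n d p F *
              (if (fun l i => if (l, i) ∈ R then F l i else U l i) = V then 1 else 0))
          = modelWeight k n d p V) ∧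
    ((∀ l : Fin k, (l, s l) ∉ R) →
      ∀ V : Fin k → Fin n → Fin d → Bool,
        (∑ U : Fin k → Fin n → Fin d → Bool, ∑ F : Fin k → Fin n → Fin d → Bool,
            plantedWeight k n d p s U * modelWeight k n d p F *
              (if (fun l i => if (l, i) ∈ R then F l i else U l i) = V then 1 else 0))
          = plantedWeight k n d p s V) :=
  stmt13_general k n d p s R
end
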